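/- There exists a constant c₁ > 0 (depending on d, r, p, A) such that for every x with r ≤ ‖x‖ ≤ 1 and every s ∈ (0, 1 − r], ∫_{B(x,s)} f(y) dy ≥ c₁ s^{p+d}. -/

import Mathlib

/-!
Move `x` along its ray to the point `z` whose norm is `‖x‖` clamped into `[r + 2s/3, 1 - s/3]`;
this costs at most `2s/3`, so `B(z, s/3) ⊆ B(x, s)`, and on `B(z, s/3)` the norm lies in
`[r + s/3, 1]`, where `f ≥ A (s/3)^p`. The integral over `B(x, s)` is therefore at least
`A (s/3)^p · vol B(z, s/3) = A 3^{-(p+d)} vol B(0, 1) · s^{p+d}`.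
-/

open MeasureTheory Metric Module

section

variable {E : Type*} [NormedAddCommGroup E] [NormedSpace ℝ E]

theorem norm_smul_mul_inv_norm_sub_self {x : E} (hx : x ≠ 0) (t : ℝ) :
    ‖(t * ‖x‖⁻¹) • x - x‖ = |t - ‖x‖| := by
  have hx' : 0 < ‖x‖ := norm_pos_iff.mpr hx
  have hzx : (t * ‖x‖⁻¹) • x - x = (t * ‖x‖⁻¹ - 1) • x := by rw [sub_smul, one_smul]
  rw [hzx, norm_smul, Real.norm_eq_abs, ← abs_norm x, ← abs_mul, abs_norm]
  congr 1
  field_simp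

theorem exists_norm_sub_le_of_mem_annulus {r ρ : ℝ} {x : E} (hr : 0 < r) (hρ : 0 ≤ ρ)
    (hρr : 3 * ρ ≤ 1 - r) (hxr : r ≤ ‖x‖) (hx1 : ‖x‖ ≤ 1) :
    ∃ z : E, ‖z - x‖ ≤ 2 * ρ ∧ r + 2 * ρ ≤ ‖z‖ ∧ ‖z‖ ≤ 1 - ρ := by
  have hx : x ≠ 0 := norm_pos_iff.mp (hr.trans_le hxr)
  set t := max (r + 2 * ρ) (min ‖x‖ (1 - ρ))
  have ht : 0 ≤ t := by positivity
  refine ⟨(t * ‖x‖⁻¹) • x, ?_, ?_⟩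
  · rw [norm_smul_mul_inv_norm_sub_self hx, abs_le]
    constructor <;> simp only [t, max_def, min_def] <;> split_ifs <;> linarith
  · have hz : ‖(t * ‖x‖⁻¹) • x‖ = t := by simpa using norm_smul_inv_norm' (𝕜 := ℝ) ht hx
    rw [hz]
    constructor <;> simp only [t, max_def, min_def] <;> split_ifs <;> linarith

end

section

variable {E : Type*} [NormedAddCommGroup E]

noncomputable def annulusDensity (r : ℝ) (p : ℕ) (A : ℝ) (y : E) : ℝ :=
  if r ≤ ‖y‖ ∧ ‖y‖ ≤ 1 then A * (‖y‖ - r) ^ p else 0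

variable {r A ρ : ℝ} {p : ℕ}

theorem annulusDensity_nonneg (hA : 0 ≤ A) (y : E) : 0 ≤ annulusDensity r p A y := by
  unfold annulusDensity
  split_ifs with hy
  · exact mul_nonneg hA (pow_nonneg (sub_nonneg.mpr hy.1) p)
  · rfl

theorem annulusDensity_le (hA : 0 ≤ A) (y : E) : annulusDensity r p A y ≤ A * |1 - r| ^ p := by
  unfold annulusDensity
  split_ifs with hy
  · gcongr
    · exact sub_nonneg.mpr hy.1
    · exact (sub_le_sub_right hy.2 r).trans (le_abs_self _)
  · positivity

theorem mul_pow_le_annulusDensity (hA : 0 ≤ A) (hρ : 0 ≤ ρ) {y : E} (hry : r + ρ ≤ ‖y‖)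
    (hy1 : ‖y‖ ≤ 1) : A * ρ ^ p ≤ annulusDensity r p A y := by
  rw [annulusDensity, if_pos ⟨by linarith, hy1⟩]
  gcongr
  linarith

variable [MeasurableSpace E] [OpensMeasurableSpace E]

theorem measurable_annulusDensity : Measurable (annulusDensity r p A : E → ℝ) :=
  Measurable.ite ((measurableSet_le measurable_const measurable_norm).inter
    (measurableSet_le measurable_norm measurable_const))
    (measurable_const.mul ((measurable_norm.sub measurable_const).pow_const p)) measurable_const

theorem integrableOn_annulusDensity (hA : 0 ≤ A) {μ : Measure E} {s : Set E} (hs : μ s ≠ ⊤) :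
    IntegrableOn (annulusDensity r p A) s μ :=
  Measure.integrableOn_of_bounded hs measurable_annulusDensity.aestronglyMeasurable
    (Filter.Eventually.of_forall fun y => by
      rw [Real.norm_of_nonneg (annulusDensity_nonneg hA y)]
      exact annulusDensity_le hA y)

end

theorem mul_measureReal_le_setIntegral {X : Type*} [MeasurableSpace X] {μ : Measure X}
    {f : X → ℝ} {s t : Set X} {c : ℝ} (hst : s ⊆ t) (hs : MeasurableSet s) (hμs : μ s ≠ ⊤)
    (hf : IntegrableOn f t μ) (hf0 : 0 ≤ᵐ[μ.restrict t] f) (hc : ∀ y ∈ s, c ≤ f y) :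
    c * μ.real s ≤ ∫ y in t, f y ∂μ :=
  (setIntegral_ge_of_const_le_real hs hμs hc (hf.mono_set hst)).trans
    (setIntegral_mono_set hf hf0 (Filter.Eventually.of_forall hst))

section

variable {E : Type*} [NormedAddCommGroup E] [NormedSpace ℝ E] [FiniteDimensional ℝ E]
  [MeasurableSpace E] [BorelSpace E] (μ : Measure E) [μ.IsAddHaarMeasure]

theorem mul_pow_le_setIntegral_ball_annulusDensity {r A : ℝ} {p : ℕ} (hr : 0 < r) (hA : 0 ≤ A)
    {x : E} (hxr : r ≤ ‖x‖) (hx1 : ‖x‖ ≤ 1) {s : ℝ} (hs : 0 < s) (hsr : s ≤ 1 - r) :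
    A * 3⁻¹ ^ (p + finrank ℝ E) * μ.real (ball 0 1) * s ^ (p + finrank ℝ E) ≤
      ∫ y in ball x s, annulusDensity r p A y ∂μ := by
  set ρ := s / 3 with hρs
  have hρ : 0 < ρ := by positivity
  obtain ⟨z, hzx, hrz, hz1⟩ :=
    exists_norm_sub_le_of_mem_annulus hr hρ.le (by linarith [hρs]) hxr hx1
  have hsub : ball z ρ ⊆ ball x s := ball_subset_ball' (by rw [dist_eq_norm]; linarith [hρs])
  have hlow : ∀ y ∈ ball z ρ, A * ρ ^ p ≤ annulusDensity r p A y := fun y hy => by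
    have hyz := abs_norm_sub_norm_le y z
    rw [mem_ball_iff_norm] at hy
    exact mul_pow_le_annulusDensity hA hρ.le (by linarith [neg_abs_le (‖y‖ - ‖z‖)])
      (by linarith [le_abs_self (‖y‖ - ‖z‖)])
  calc A * 3⁻¹ ^ (p + finrank ℝ E) * μ.real (ball 0 1) * s ^ (p + finrank ℝ E)
      = A * ρ ^ p * μ.real (ball z ρ) := by
        rw [measureReal_def μ (ball z ρ), Measure.addHaar_ball_of_pos μ z hρ,
          ENNReal.toReal_mul, ENNReal.toReal_ofReal (by positivity), ← measureReal_def, hρs,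
          pow_add]
        ring
    _ ≤ ∫ y in ball x s, annulusDensity r p A y ∂μ :=
        mul_measureReal_le_setIntegral hsub measurableSet_ball measure_ball_lt_top.ne
          (integrableOn_annulusDensity hA measure_ball_lt_top.ne)
          (Filter.Eventually.of_forall (annulusDensity_nonneg hA)) hlow

end

theorem annulus_density_ball_lower_bound_general
    (d : ℕ) (r : ℝ) (hr0 : 0 < r)
    (p : ℕ) (A : ℝ) (hA : 0 < A)
    (f : EuclideanSpace ℝ (Fin d) → ℝ)
    (hf : ∀ y, f y = if r ≤ ‖y‖ ∧ ‖y‖ ≤ 1 then A * (‖y‖ - r) ^ p else 0) :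
    ∃ c₁ : ℝ, 0 < c₁ ∧
      ∀ x : EuclideanSpace ℝ (Fin d), r ≤ ‖x‖ → ‖x‖ ≤ 1 →
        ∀ s : ℝ, 0 < s → s ≤ 1 - r →
          c₁ * s ^ (p + d) ≤ ∫ y in Metric.ball x s, f y := by
  obtain rfl : f = annulusDensity r p A := funext hf
  have hball : 0 < volume.real (ball (0 : EuclideanSpace ℝ (Fin d)) 1) :=
    ENNReal.toReal_pos (measure_ball_pos volume _ one_pos).ne' measure_ball_lt_top.ne
  refine ⟨A * 3⁻¹ ^ (p + d) * volume.real (ball (0 : EuclideanSpace ℝ (Fin d)) 1),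
    by positivity, fun x hxr hx1 s hs hsr => ?_⟩
  simpa only [finrank_euclideanSpace_fin] using
    mul_pow_le_setIntegral_ball_annulusDensity volume hr0 hA.le hxr hx1 hs hsr

/-- cf. eq. (34) of Iyer–Thacker: for the polynomially vanishing annulus
density `f(y) = A(‖y‖ − r)^p` for `r ≤ ‖y‖ ≤ 1` (and `0` otherwise) on Euclidean `ℝ^d`,
there is `c₁ > 0` with `∫_{B(x,s)} f ≥ c₁ s^{p+d}` for every `x` in the annulus and every
`0 < s ≤ 1 − r`. -/
theorem annulus_density_ball_lower_bound
    (d : ℕ) (hd : 1 ≤ d) (r : ℝ) (hr0 : 0 < r) (hr1 : r < 1)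
    (p : ℕ) (hp : 1 ≤ p) (A : ℝ) (hA : 0 < A)
    (f : EuclideanSpace ℝ (Fin d) → ℝ)
    (hf : ∀ y, f y = if r ≤ ‖y‖ ∧ ‖y‖ ≤ 1 then A * (‖y‖ - r) ^ p else 0) :
    ∃ c₁ : ℝ, 0 < c₁ ∧
      ∀ x : EuclideanSpace ℝ (Fin d), r ≤ ‖x‖ → ‖x‖ ≤ 1 →
        ∀ s : ℝ, 0 < s → s ≤ 1 - r →
          c₁ * s ^ (p + d) ≤ ∫ y in Metric.ball x s, f y :=
  annulus_density_ball_lower_bound_general d r hr0 p A hA f hf
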